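/- (Lundberg's equation, left solution.) For v ∈ (0,1] let G̃_v := Σ_{n=0}^∞ v^n · M̃(n,1), where M̃(n,1) is the N×N matrix whose (i,j)-entry is the probability of {τ̃_1^+ = n, J̃_n = j} in the time-reversed model with initial distribution δ_i. Then the matrix R_v := Δ_π^{−1} · G̃_v^T · Δ_π satisfies R_v = v · Σ_{m=0}^∞ R_v^m · Λ(m), the series converging entrywise. -/

import Mathlib

/-!
The surplus `X_k = k - S_k` rises by at most one per step, so it can only reach level `a + b`
after reaching `a` exactly; restarting there gives `G(a + b) = G(a) G(b)`, hence `G(a) = G(1)^a`.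
A first step with claim `m` leaves the surplus `m` levels below `1`, which gives the right
Lundberg equation `G = v Σ_m Λ(m) G^m`. Both identities are proved for the hitting matrices
`M(n, a)` by induction on the horizon `n`. The similarity `X ↦ Δ_π⁻¹ Xᵀ Δ_π` reverses products and
maps `Λ̃(m)` back to `Λ(m)`, so it turns the right equation of the reversed model into the left
equation for `R_v`.

All series are summed in `ℝ≥0∞`, where they may be reordered freely; the reversed model is again
stochastic, so the entries of `G̃_v` are at most `1` and the identity transfers back to `ℝ`.
-/

open scoped BigOperators

noncomputable section

namespace CMB

/-- The weight that the compound Markov binomial model with horizon `n`, jump matrices `Λ`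
and initial distribution `μ` assigns to the path `(J, C)`. -/
def pathWeight {N : ℕ} (Λ : ℕ → Matrix (Fin N) (Fin N) ℝ) (μ : Fin N → ℝ) (n : ℕ)
    (J : Fin (n + 1) → Fin N) (C : Fin n → ℕ) : ℝ :=
  μ (J 0) * ∏ k : Fin n, Λ (C k) (J k.castSucc) (J k.succ)

/-- The probability of the event `A` in the horizon-`n` compound Markov binomial model:
the sum of the weights of the paths belonging to the event. -/
def prob {N : ℕ} (Λ : ℕ → Matrix (Fin N) (Fin N) ℝ) (μ : Fin N → ℝ) (n : ℕ)
    (A : (Fin (n + 1) → Fin N) → (Fin n → ℕ) → Prop) : ℝ :=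
  ∑' p : { p : (Fin (n + 1) → Fin N) × (Fin n → ℕ) // A p.1 p.2 },
    pathWeight Λ μ n p.1.1 p.1.2

/-- Partial sums `S_k = C_1 + ⋯ + C_k` of the claims (`C i` is claim number `i+1`). -/
def S {n : ℕ} (C : Fin n → ℕ) (k : ℕ) : ℕ :=
  ∑ j : Fin n, if (j : ℕ) < k then C j else 0

/-- Dirac initial distribution `δ_i`. -/
def delta {N : ℕ} (i : Fin N) : Fin N → ℝ := fun i' => if i' = i then 1 else 0

/-- `hitM Λ n a i j` is the probability, in the model with initial distribution `δ_i` and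
initial surplus `x = 0` (so `X_k = k - S_k`), of the event `{τ_a^+ = n, J_n = j}`,
i.e. `X_k < a` for all `k < n` and `X_n ≥ a` and `J_n = j`. -/
def hitM {N : ℕ} (Λ : ℕ → Matrix (Fin N) (Fin N) ℝ) (n a : ℕ) : Matrix (Fin N) (Fin N) ℝ :=
  fun i j => prob Λ (delta i) n fun J C =>
    (∀ k, k < n → (k : ℤ) - S C k < (a : ℤ)) ∧ (a : ℤ) ≤ (n : ℤ) - S C n ∧ J (Fin.last n) = j

/-- Jump matrices `Λ̃(m)`, with `λ̃_{ij}(m) = (π_j/π_i)·λ_{ji}(m)`, of the time-reversed model. -/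
def lamTilde {N : ℕ} (Λ : ℕ → Matrix (Fin N) (Fin N) ℝ) (π : Fin N → ℝ) :
    ℕ → Matrix (Fin N) (Fin N) ℝ := fun m i j => π j / π i * Λ m j i

/-- `Gser Λ v a` is the matrix `G_v(a) = Σ_{n=0}^∞ v^n · M(n,a)`, entrywise. -/
def Gser {N : ℕ} (Λ : ℕ → Matrix (Fin N) (Fin N) ℝ) (v : ℝ) (a : ℕ) :
    Matrix (Fin N) (Fin N) ℝ := fun i j => ∑' n : ℕ, v ^ n * hitM Λ n a i j

/-- `R_v := Δ_π⁻¹ · G̃_vᵀ · Δ_π`, where `G̃_v = Σ_n v^n M̃(n,1)` is computed in the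
time-reversed model. -/
def Rmat {N : ℕ} (Λ : ℕ → Matrix (Fin N) (Fin N) ℝ) (π : Fin N → ℝ) (v : ℝ) :
    Matrix (Fin N) (Fin N) ℝ := fun i j => π j / π i * Gser (lamTilde Λ π) v 1 j i

end CMB

open scoped ENNReal

open Finset in
theorem ENNReal.tsum_mul_tsum_eq_tsum_sum_antidiagonal (f g : ℕ → ℝ≥0∞) :
    (∑' n, f n) * ∑' n, g n = ∑' n, ∑ kl ∈ antidiagonal n, f kl.1 * g kl.2 := by
  calc (∑' n, f n) * ∑' n, g n = ∑' kl : ℕ × ℕ, f kl.1 * g kl.2 := by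
        rw [← ENNReal.tsum_mul_right, ENNReal.tsum_prod (f := fun k l => f k * g l)]
        simp only [← ENNReal.tsum_mul_left]
    _ = ∑' n, ∑' kl : antidiagonal n, f kl.1.1 * g kl.1.2 :=
        (HasAntidiagonal.sigmaAntidiagonalEquivProd.tsum_eq _).symm.trans (ENNReal.tsum_sigma' _)
    _ = ∑' n, ∑ kl ∈ antidiagonal n, f kl.1 * g kl.2 :=
        tsum_congr fun n => Finset.tsum_subtype _ fun kl : ℕ × ℕ => f kl.1 * g kl.2

namespace Matrix

variable {l m n : Type*} [Fintype m]

theorem mul_apply_ne_top {A : Matrix l m ℝ≥0∞} {B : Matrix m n ℝ≥0∞}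
    (hA : ∀ i j, A i j ≠ ∞) (hB : ∀ i j, B i j ≠ ∞) (i : l) (k : n) : (A * B) i k ≠ ∞ :=
  ENNReal.sum_ne_top.2 fun j _ => ENNReal.mul_ne_top (hA i j) (hB j k)

theorem map_toReal_mul {A : Matrix l m ℝ≥0∞} {B : Matrix m n ℝ≥0∞}
    (hA : ∀ i j, A i j ≠ ∞) (hB : ∀ i j, B i j ≠ ∞) :
    (A * B).map ENNReal.toReal = A.map ENNReal.toReal * B.map ENNReal.toReal := by
  ext i k
  simp only [map_apply, mul_apply, ENNReal.toReal_mul,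
    ENNReal.toReal_sum fun j _ => ENNReal.mul_ne_top (hA i j) (hB j k)]

variable [DecidableEq m]

theorem pow_apply_ne_top {A : Matrix m m ℝ≥0∞} (hA : ∀ i j, A i j ≠ ∞) (k : ℕ) (i j : m) :
    (A ^ k) i j ≠ ∞ := by
  induction k generalizing i j with
  | zero => rw [pow_zero, one_apply]; split_ifs <;> simp
  | succ k ih => rw [pow_succ]; exact mul_apply_ne_top ih hA i j

theorem map_toReal_pow {A : Matrix m m ℝ≥0∞} (hA : ∀ i j, A i j ≠ ∞) (k : ℕ) :
    (A ^ k).map ENNReal.toReal = A.map ENNReal.toReal ^ k := by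
  induction k with
  | zero => ext i j; rw [pow_zero, pow_zero, map_apply, one_apply, one_apply]; split_ifs <;> simp
  | succ k ih => rw [pow_succ, pow_succ, map_toReal_mul (pow_apply_ne_top hA k) hA, ih]

end Matrix

namespace CMB

lemma S_zero {n : ℕ} (C : Fin n → ℕ) : S C 0 = 0 := by
  simp [S]

lemma S_cons {n : ℕ} (m : ℕ) (C : Fin n → ℕ) (k : ℕ) :
    S (Fin.cons m C : Fin (n + 1) → ℕ) (k + 1) = m + S C k := by
  simp [S, Fin.sum_univ_succ]

section Hitting

variable {ι : Type*} (L : ℕ → Matrix ι ι ℝ≥0∞)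

def pathProd (n : ℕ) (J : Fin (n + 1) → ι) (C : Fin n → ℕ) : ℝ≥0∞ :=
  ∏ k : Fin n, L (C k) (J k.castSucc) (J k.succ)

def hitEvent (n a : ℕ) (i j : ι) : Set ((Fin (n + 1) → ι) × (Fin n → ℕ)) :=
  {p | p.1 0 = i ∧ (∀ k < n, (k : ℤ) - S p.2 k < a) ∧ (a : ℤ) ≤ n - S p.2 n ∧
    p.1 (Fin.last n) = j}

def hitting (n a : ℕ) : Matrix ι ι ℝ≥0∞ :=
  Matrix.of fun i j => ∑' p, (hitEvent n a i j).indicator (fun p => pathProd L n p.1 p.2) p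

lemma pathProd_cons {n : ℕ} (x : ι) (m : ℕ) (J : Fin (n + 1) → ι) (C : Fin n → ℕ) :
    pathProd L (n + 1) (Fin.cons x J) (Fin.cons m C) = L m x (J 0) * pathProd L n J C := by
  simp [pathProd, Fin.prod_univ_succ]

lemma cons_mem_hitEvent_iff {n a : ℕ} {i j x : ι} {m : ℕ} {J : Fin (n + 1) → ι}
    {C : Fin n → ℕ} :
    (Fin.cons x J, Fin.cons m C) ∈ hitEvent (n + 1) (a + 1) i j ↔
      x = i ∧ (J, C) ∈ hitEvent n (a + m) (J 0) j := by
  have hlast : (Fin.cons x J : Fin (n + 2) → ι) (Fin.last (n + 1)) = J (Fin.last n) := by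
    rw [← Fin.succ_last, Fin.cons_succ]
  simp only [hitEvent, Set.mem_ofPred_eq, Fin.cons_zero, hlast, true_and]
  constructor
  · rintro ⟨rfl, hbelow, hreach, rfl⟩
    refine ⟨rfl, fun k hk => ?_, ?_, rfl⟩
    · have := hbelow (k + 1) (by omega)
      rw [S_cons] at this
      push_cast at this ⊢
      omega
    · rw [S_cons] at hreach
      push_cast at hreach ⊢
      omega
  · rintro ⟨rfl, hbelow, hreach, rfl⟩
    refine ⟨rfl, fun k hk => ?_, ?_, rfl⟩
    · rcases k with _ | k
      · simp [S_zero]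
      · have := hbelow k (by omega)
        rw [S_cons]
        push_cast at this ⊢
        omega
    · rw [S_cons]
      push_cast at hreach ⊢
      omega

lemma hitEvent_succ_zero (n : ℕ) (i j : ι) : hitEvent (n + 1) 0 i j = ∅ := by
  ext p
  simp only [hitEvent, Set.mem_ofPred_eq, Set.mem_empty_iff_false, iff_false]
  rintro ⟨-, hbelow, -⟩
  simpa [S_zero] using hbelow 0 (by omega)

lemma hitting_zero [DecidableEq ι] (a : ℕ) :
    hitting L 0 a = if a = 0 then 1 else 0 := by
  ext i j
  rw [hitting, Matrix.of_apply, tsum_eq_single (fun _ => i, Fin.elim0)]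
  · by_cases ha : a = 0 <;> by_cases hij : i = j <;>
      simp [hitEvent, pathProd, S_zero, Matrix.one_apply, ha, hij]
  · rintro ⟨J, C⟩ hp
    refine Set.indicator_of_notMem (fun hmem => hp ?_) _
    exact Prod.ext (funext fun k => by rw [Fin.fin_one_eq_zero k, hmem.1])
      (Subsingleton.elim _ _)

lemma hitting_succ_zero (n : ℕ) : hitting L (n + 1) 0 = 0 := by
  ext i j
  simp [hitting, hitEvent_succ_zero]

def consPathEquiv (ι : Type*) (n : ℕ) :
    (ι × ℕ) × ((Fin (n + 1) → ι) × (Fin n → ℕ)) ≃ (Fin (n + 2) → ι) × (Fin (n + 1) → ℕ) where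
  toFun q := (Fin.cons q.1.1 q.2.1, Fin.cons q.1.2 q.2.2)
  invFun p := ((p.1 0, p.2 0), (Fin.tail p.1, Fin.tail p.2))
  left_inv q := by simp
  right_inv p := by simp

def genFun (v : ℝ≥0∞) (a : ℕ) : Matrix ι ι ℝ≥0∞ :=
  Matrix.of fun i j => ∑' n, v ^ n * hitting L n a i j

lemma genFun_zero [DecidableEq ι] (v : ℝ≥0∞) : genFun L v 0 = 1 := by
  ext i j
  rw [genFun, Matrix.of_apply, tsum_eq_single 0 fun n hn => by
    obtain ⟨n, rfl⟩ := Nat.exists_eq_succ_of_ne_zero hn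
    simp [hitting_succ_zero]]
  simp [hitting_zero]

variable [Fintype ι]

lemma hitting_succ_succ (n a : ℕ) (i j : ι) :
    hitting L (n + 1) (a + 1) i j = ∑' m, ∑ y, L m i y * hitting L n (a + m) y j := by
  classical
  have hcons : ∀ (x : ι) (m : ℕ) (p : (Fin (n + 1) → ι) × (Fin n → ℕ)),
      (hitEvent (n + 1) (a + 1) i j).indicator (fun p => pathProd L (n + 1) p.1 p.2)
          (consPathEquiv ι n ((x, m), p)) =
        if x = i then
          ∑ y, L m i y * (hitEvent n (a + m) y j).indicator (fun p => pathProd L n p.1 p.2) p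
        else 0 := by
    rintro x m ⟨J, C⟩
    rw [Finset.sum_eq_single (J 0)
      (fun y _ hy => by rw [Set.indicator_of_notMem (fun h => hy h.1.symm), mul_zero])
      (by simp)]
    change (hitEvent _ _ i j).indicator _ (Fin.cons x J, Fin.cons m C) = _
    simp only [Set.indicator_apply, cons_mem_hitEvent_iff, pathProd_cons]
    split_ifs <;> simp_all
  simp only [hitting, Matrix.of_apply]
  rw [← (consPathEquiv ι n).tsum_eq, ENNReal.tsum_prod', ENNReal.tsum_prod', tsum_fintype]
  simp only [hcons]
  rw [Finset.sum_eq_single i (fun x _ hx => by simp [hx]) (by simp)]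
  refine tsum_congr fun m => ?_
  simp only [← ENNReal.tsum_mul_left]
  exact Summable.tsum_finsetSum fun _ _ => ENNReal.summable

open Finset in
lemma hitting_add [DecidableEq ι] (n a b : ℕ) :
    hitting L n (a + b) = ∑ kl ∈ antidiagonal n, hitting L kl.1 a * hitting L kl.2 b := by
  induction n generalizing a with
  | zero =>
    simp only [hitting_zero, Nat.antidiagonal_zero, sum_singleton]
    split_ifs <;> simp_all
  | succ n ih =>
    rw [Nat.sum_antidiagonal_succ]
    rcases a with _ | a
    · simp [hitting_zero, hitting_succ_zero]
    ext i j
    rw [show a + 1 + b = a + b + 1 by omega, hitting_succ_succ, hitting_zero, if_neg (by omega),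
      zero_mul, zero_add]
    simp only [show ∀ m, a + b + m = a + m + b by omega, ih, Matrix.sum_apply, Matrix.mul_apply,
      hitting_succ_succ, Finset.mul_sum, Finset.sum_mul, ← ENNReal.tsum_mul_right,
      ← Summable.tsum_finsetSum fun _ _ => ENNReal.summable]
    refine tsum_congr fun m => ?_
    rw [Finset.sum_comm]
    refine Finset.sum_congr rfl fun kl _ => ?_
    rw [Finset.sum_comm]
    simp only [mul_assoc]

open Finset in
lemma sum_range_sum_hitting_le (hL : ∀ i, ∑' m, ∑ j, L m i j ≤ 1) (T a : ℕ) (i : ι) :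
    ∑ n ∈ range T, ∑ j, hitting L n a i j ≤ 1 := by
  classical
  induction T generalizing a i with
  | zero => simp
  | succ T ih =>
    rw [sum_range_succ']
    rcases a with _ | a
    · simp [hitting_succ_zero, hitting_zero, Matrix.one_apply]
    calc ∑ n ∈ range T, ∑ j, hitting L (n + 1) (a + 1) i j + ∑ j, hitting L 0 (a + 1) i j
        = ∑' m, ∑ y, L m i y * ∑ n ∈ range T, ∑ j, hitting L n (a + m) y j := by
          simp only [hitting_succ_succ, hitting_zero, Nat.succ_ne_zero, if_false,
            Matrix.zero_apply, sum_const_zero, add_zero, mul_sum,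
            ← Summable.tsum_finsetSum fun _ _ => ENNReal.summable]
          refine tsum_congr fun m => ?_
          conv_rhs => rw [sum_comm]
          exact sum_congr rfl fun n _ => sum_comm
      _ ≤ ∑' m, ∑ y, L m i y * 1 := by gcongr with m y; exact ih _ _
      _ ≤ 1 := by simpa using hL i

lemma genFun_le_one (hL : ∀ i, ∑' m, ∑ j, L m i j ≤ 1) {v : ℝ≥0∞} (hv : v ≤ 1) (a : ℕ)
    (i j : ι) : genFun L v a i j ≤ 1 :=
  calc genFun L v a i j ≤ ∑' n, hitting L n a i j :=
        ENNReal.tsum_le_tsum fun _ => mul_le_of_le_one_left' (pow_le_one₀ zero_le hv)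
    _ ≤ 1 := ENNReal.tsum_le_of_sum_range_le fun T =>
        (Finset.sum_le_sum fun _ _ => Finset.single_le_sum (fun _ _ => zero_le)
          (Finset.mem_univ j)).trans (sum_range_sum_hitting_le L hL T a i)

open Finset in
lemma genFun_add [DecidableEq ι] (v : ℝ≥0∞) (a b : ℕ) :
    genFun L v (a + b) = genFun L v a * genFun L v b := by
  ext i j
  simp only [genFun, Matrix.of_apply, Matrix.mul_apply, hitting_add, Matrix.sum_apply,
    ENNReal.tsum_mul_tsum_eq_tsum_sum_antidiagonal]
  rw [← Summable.tsum_finsetSum fun _ _ => ENNReal.summable]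
  refine tsum_congr fun n => ?_
  rw [mul_sum, sum_comm]
  refine sum_congr rfl fun kl hkl => ?_
  rw [← HasAntidiagonal.mem_antidiagonal.mp hkl, pow_add, mul_sum]
  exact sum_congr rfl fun x _ => by ring

lemma genFun_eq_pow [DecidableEq ι] (v : ℝ≥0∞) (a : ℕ) : genFun L v a = genFun L v 1 ^ a := by
  induction a with
  | zero => rw [genFun_zero, pow_zero]
  | succ a ih => rw [genFun_add, ih, pow_succ]

lemma genFun_one_apply_eq_tsum [DecidableEq ι] (v : ℝ≥0∞) (i j : ι) :
    genFun L v 1 i j = ∑' m, v * (L m * genFun L v 1 ^ m) i j := by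
  simp only [← genFun_eq_pow, Matrix.mul_apply]
  simp only [genFun, Matrix.of_apply]
  rw [tsum_eq_zero_add' ENNReal.summable, hitting_zero, if_neg one_ne_zero, Matrix.zero_apply,
    mul_zero, zero_add]
  simp only [hitting_succ_succ L _ 0, zero_add, ← ENNReal.tsum_mul_left]
  rw [ENNReal.tsum_comm]
  refine tsum_congr fun m => ?_
  simp only [Finset.mul_sum, ← ENNReal.tsum_mul_left]
  rw [← Summable.tsum_finsetSum fun _ _ => ENNReal.summable]
  exact tsum_congr fun n => Finset.sum_congr rfl fun x _ => by ring

end Hitting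

section RealModel

variable {ι : Type*} (Λ : ℕ → Matrix ι ι ℝ)

def ofRealJumps : ℕ → Matrix ι ι ℝ≥0∞ := fun m => (Λ m).map ENNReal.ofReal

variable {Λ}

lemma map_toReal_ofRealJumps (hΛ : ∀ m i j, 0 ≤ Λ m i j) (m : ℕ) :
    (ofRealJumps Λ m).map ENNReal.toReal = Λ m := by
  ext i j
  simp [ofRealJumps, hΛ]

lemma ofRealJumps_tsum_sum_le_one [Fintype ι] {P : Matrix ι ι ℝ} (hΛ : ∀ m i j, 0 ≤ Λ m i j)
    (hP : ∀ i j, HasSum (fun m => Λ m i j) (P i j)) (hPsub : ∀ i, ∑ j, P i j ≤ 1) (i : ι) :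
    ∑' m, ∑ j, ofRealJumps Λ m i j ≤ 1 := by
  have hcol : ∀ j, ∑' m, ofRealJumps Λ m i j = ENNReal.ofReal (P i j) := fun j => by
    rw [← (hP i j).tsum_eq, ENNReal.ofReal_tsum_of_nonneg (hΛ · i j) (hP i j).summable]
    rfl
  rw [Summable.tsum_finsetSum fun _ _ => ENNReal.summable, Finset.sum_congr rfl fun j _ => hcol j,
    ← ENNReal.ofReal_sum_of_nonneg fun j _ => (hP i j).nonneg (hΛ · i j)]
  exact ENNReal.ofReal_le_one.2 (hPsub i)

end RealModel

section FinModel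

variable {N : ℕ} {Λ : ℕ → Matrix (Fin N) (Fin N) ℝ}

lemma hitM_eq_toReal (hΛ : ∀ m i j, 0 ≤ Λ m i j) (n a : ℕ) (i j : Fin N) :
    hitM Λ n a i j = (hitting (ofRealJumps Λ) n a i j).toReal := by
  classical
  have hfin : ∀ p, (hitEvent n a i j).indicator
      (fun p => pathProd (ofRealJumps Λ) n p.1 p.2) p ≠ ∞ := fun p => by
    rw [Set.indicator_apply]
    split_ifs
    · exact ENNReal.prod_ne_top fun _ _ => ENNReal.ofReal_ne_top
    · exact ENNReal.zero_ne_top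
  rw [hitting, Matrix.of_apply, ENNReal.tsum_toReal_eq hfin]
  refine (tsum_subtype {p : (Fin (n + 1) → Fin N) × (Fin n → ℕ) |
      (∀ k < n, (k : ℤ) - S p.2 k < a) ∧ (a : ℤ) ≤ n - S p.2 n ∧ p.1 (Fin.last n) = j}
    fun p => pathWeight Λ (delta i) n p.1 p.2).trans (tsum_congr fun p => ?_)
  by_cases hp : p ∈ hitEvent n a i j
  · rw [Set.indicator_of_mem hp, Set.indicator_of_mem (by exact hp.2)]
    simp [pathWeight, pathProd, delta, hp.1, ofRealJumps, ENNReal.toReal_prod, hΛ]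
  · rw [Set.indicator_of_notMem hp, ENNReal.toReal_zero, Set.indicator_apply]
    split_ifs with hA
    · simp [pathWeight, delta, show p.1 0 ≠ i from fun h => hp ⟨h, hA⟩]
    · rfl

lemma Gser_eq_toReal (hΛ : ∀ m i j, 0 ≤ Λ m i j) {v : ℝ} (hv : 0 ≤ v) (a : ℕ) (i j : Fin N)
    (hfin : genFun (ofRealJumps Λ) (ENNReal.ofReal v) a i j ≠ ∞) :
    Gser Λ v a i j = (genFun (ofRealJumps Λ) (ENNReal.ofReal v) a i j).toReal := by
  rw [genFun, Matrix.of_apply, ENNReal.tsum_toReal_eq fun n =>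
    ne_top_of_le_ne_top hfin (ENNReal.le_tsum n)]
  refine tsum_congr fun n => ?_
  rw [ENNReal.toReal_mul, ENNReal.toReal_pow, ENNReal.toReal_ofReal hv, hitM_eq_toReal hΛ]

theorem hasSum_Gser_lundberg {P : Matrix (Fin N) (Fin N) ℝ} (hΛ : ∀ m i j, 0 ≤ Λ m i j)
    (hP : ∀ i j, HasSum (fun m => Λ m i j) (P i j)) (hPsub : ∀ i, ∑ j, P i j ≤ 1)
    {v : ℝ} (hv0 : 0 ≤ v) (hv1 : v ≤ 1) (i j : Fin N) :
    HasSum (fun m => v * (Λ m * Gser Λ v 1 ^ m) i j) (Gser Λ v 1 i j) := by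
  set G := genFun (ofRealJumps Λ) (ENNReal.ofReal v) 1
  have hG : ∀ i j, G i j ≠ ∞ := fun i j => ne_top_of_le_ne_top ENNReal.one_ne_top
    (genFun_le_one _ (ofRealJumps_tsum_sum_le_one hΛ hP hPsub) (ENNReal.ofReal_le_one.2 hv1) 1 i j)
  have hGser : Gser Λ v 1 = G.map ENNReal.toReal := by
    ext i j
    exact Gser_eq_toReal hΛ hv0 1 i j (hG i j)
  have hterm : ∀ m, v * (Λ m * Gser Λ v 1 ^ m) i j =
      (ENNReal.ofReal v * (ofRealJumps Λ m * G ^ m) i j).toReal := fun m => by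
    rw [ENNReal.toReal_mul, ENNReal.toReal_ofReal hv0, ← Matrix.map_apply (f := ENNReal.toReal),
      Matrix.map_toReal_mul (A := ofRealJumps Λ m) (fun _ _ => ENNReal.ofReal_ne_top)
        (Matrix.pow_apply_ne_top hG m),
      map_toReal_ofRealJumps hΛ, Matrix.map_toReal_pow hG, hGser]
  have hsum : G i j = _ := genFun_one_apply_eq_tsum (ofRealJumps Λ) (ENNReal.ofReal v) i j
  have hfin := hsum ▸ hG i j
  rw [funext hterm, hGser, Matrix.map_apply, hsum,
    ENNReal.tsum_toReal_eq (ENNReal.ne_top_of_tsum_ne_top hfin)]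
  exact ENNReal.hasSum_toReal hfin

end FinModel

section TimeReversal

variable {ι : Type*} {π : ι → ℝ}

variable (π) in
def timeReversal (X : Matrix ι ι ℝ) : Matrix ι ι ℝ := fun i j => π j / π i * X j i

lemma timeReversal_mul [Fintype ι] (hπ : ∀ i, π i ≠ 0) (X Y : Matrix ι ι ℝ) :
    timeReversal π (X * Y) = timeReversal π Y * timeReversal π X := by
  ext i j
  simp only [timeReversal, Matrix.mul_apply, Finset.mul_sum]
  refine Finset.sum_congr rfl fun k _ => ?_
  field_simp [hπ k]

lemma timeReversal_one [DecidableEq ι] (hπ : ∀ i, π i ≠ 0) : timeReversal π 1 = 1 := by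
  ext i j
  by_cases h : i = j
  · subst h
    simp [timeReversal, hπ]
  · simp [timeReversal, h, Ne.symm h]

lemma timeReversal_pow [Fintype ι] [DecidableEq ι] (hπ : ∀ i, π i ≠ 0) (X : Matrix ι ι ℝ)
    (m : ℕ) : timeReversal π (X ^ m) = timeReversal π X ^ m := by
  induction m with
  | zero => rw [pow_zero, pow_zero, timeReversal_one hπ]
  | succ m ih => rw [pow_succ, timeReversal_mul hπ, ih, pow_succ']

lemma timeReversal_timeReversal (hπ : ∀ i, π i ≠ 0) (X : Matrix ι ι ℝ) :
    timeReversal π (timeReversal π X) = X := by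
  ext i j
  simp only [timeReversal]
  field_simp [hπ i, hπ j]

end TimeReversal

lemma lamTilde_eq_timeReversal {N : ℕ} (Λ : ℕ → Matrix (Fin N) (Fin N) ℝ) (π : Fin N → ℝ)
    (m : ℕ) : lamTilde Λ π m = timeReversal π (Λ m) :=
  rfl

lemma Rmat_eq_timeReversal {N : ℕ} (Λ : ℕ → Matrix (Fin N) (Fin N) ℝ) (π : Fin N → ℝ) (v : ℝ) :
    Rmat Λ π v = timeReversal π (Gser (lamTilde Λ π) v 1) :=
  rfl

theorem lundberg_left_general
    {N : ℕ}
    (Λ : ℕ → Matrix (Fin N) (Fin N) ℝ) (P : Matrix (Fin N) (Fin N) ℝ)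
    (hΛ : ∀ m i j, 0 ≤ Λ m i j)
    (hP : ∀ i j, HasSum (fun m => Λ m i j) (P i j))
    (π : Fin N → ℝ) (hπpos : ∀ i, 0 < π i)
    (hπP : ∀ j, ∑ i, π i * P i j = π j)
    (v : ℝ) (hv0 : 0 < v) (hv1 : v ≤ 1) :
    ∀ i j, HasSum (fun m : ℕ => v * (Rmat Λ π v ^ m * Λ m) i j) (Rmat Λ π v i j) := by
  intro i j
  have hπ : ∀ i, π i ≠ 0 := fun i => (hπpos i).ne'
  have hΛ' : ∀ m i j, 0 ≤ lamTilde Λ π m i j := fun m i j =>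
    mul_nonneg (div_nonneg (hπpos j).le (hπpos i).le) (hΛ m j i)
  have hP' : ∀ i j, HasSum (fun m => lamTilde Λ π m i j) (timeReversal π P i j) :=
    fun i j => (hP j i).mul_left _
  have hP'rows : ∀ i, ∑ j, timeReversal π P i j = 1 := fun i => by
    simp only [timeReversal, div_mul_eq_mul_div, ← Finset.sum_div, hπP, div_self (hπ i)]
  have hconj : ∀ m, Rmat Λ π v ^ m * Λ m =
      timeReversal π (lamTilde Λ π m * Gser (lamTilde Λ π) v 1 ^ m) := fun m => by
    rw [Rmat_eq_timeReversal, lamTilde_eq_timeReversal, timeReversal_mul hπ, timeReversal_pow hπ,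
      timeReversal_timeReversal hπ]
  have hterm : ∀ m, v * (Rmat Λ π v ^ m * Λ m) i j =
      π j / π i * (v * (lamTilde Λ π m * Gser (lamTilde Λ π) v 1 ^ m) j i) := fun m => by
    rw [hconj]
    simp only [timeReversal]
    ring
  rw [funext hterm]
  exact (hasSum_Gser_lundberg hΛ' hP' (fun i => (hP'rows i).le) hv0.le hv1 j i).mul_left _

/-- Lundberg's equation, left solution.  For `v ∈ (0,1]`, the matrix
`R_v = Δ_π⁻¹·G̃_vᵀ·Δ_π`, where `G̃_v = Σ_n v^n M̃(n,1)` is computed in the time-reversed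
model, satisfies `R_v = v·Σ_{m=0}^∞ R_v^m·Λ(m)`, the series converging entrywise. -/
theorem lundberg_left
    {N : ℕ} (hN : 1 ≤ N)
    (Λ : ℕ → Matrix (Fin N) (Fin N) ℝ) (P : Matrix (Fin N) (Fin N) ℝ)
    (hΛ : ∀ m i j, 0 ≤ Λ m i j)
    (hP : ∀ i j, HasSum (fun m => Λ m i j) (P i j))
    (hPstoch : ∀ i, ∑ j, P i j = 1)
    (π : Fin N → ℝ) (hπpos : ∀ i, 0 < π i) (hπsum : ∑ i, π i = 1)
    (hπP : ∀ j, ∑ i, π i * P i j = π j)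
    (v : ℝ) (hv0 : 0 < v) (hv1 : v ≤ 1) :
    ∀ i j, HasSum (fun m : ℕ => v * (Rmat Λ π v ^ m * Λ m) i j) (Rmat Λ π v i j) :=
  lundberg_left_general Λ P hΛ hP π hπpos hπP v hv0 hv1

end CMB
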